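/- arXiv:2006.04144 — 2 statements merged into one kernel-verified Lean document; each statement's English description precedes it below -/
import Mathlib

section
/- For the digital image MSS′₆ (the discrete cube {0,1}³ in ℤ³ with 6-adjacency), the image of the coboundary map δ⁰ : C⁰ ≅ ℤ⁸ → C¹ ≅ ℤ¹² is a free abelian group of rank 7, and consequently the first digital simplicial cohomology group H^{1,6}(MSS′₆) = C¹/Im δ⁰ (noting δ¹ = 0 since there are no 2-simplices) is isomorphic to ℤ⁵. -/
/-!
The seven edges 000–100, 000–010, 000–001, 100–110, 100–101, 010–011, 110–111 form a
spanning tree of the cube graph. Summing along tree paths from the origin turns any values on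
the tree edges into a potential realising them, so restriction to the tree edges identifies
`Im δ⁰` with `ℤ⁷`, and every `1`-cochain is a coboundary plus a cochain supported on the five
remaining edges. The circulations around the fundamental cycles of those edges therefore
identify `C¹ / Im δ⁰` with `ℤ⁵`.
-/

/-- `6`-adjacency (c₁-adjacency) on `ℤ³`. -/
def adj6 (x y : Fin 3 → ℤ) : Prop :=
  ∃ i, |x i - y i| = 1 ∧ ∀ j, j ≠ i → x j = y j

/-- The vertex set of `MSS′₆`: the discrete cube `{0,1}³ ⊆ ℤ³`. -/
def CubeVertex : Type := {x : Fin 3 → ℤ // ∀ i, x i = 0 ∨ x i = 1}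

/-- The oriented edges of `MSS′₆`: pairs of `6`-adjacent vertices, oriented from the
smaller to the larger coordinate sum (this picks one orientation of each of the 12
adjacency edges of the cube). -/
def CubeEdge : Type :=
  {p : CubeVertex × CubeVertex //
    adj6 p.1.1 p.2.1 ∧ (∑ i, p.1.1 i) < (∑ i, p.2.1 i)}

/-- The coboundary map `δ⁰ : C⁰ → C¹`, sending a `0`-cochain `φ` to the `1`-cochain
whose value on an oriented edge is `φ(endpoint) − φ(startpoint)`. -/
def delta0 : (CubeVertex → ℤ) →+ (CubeEdge → ℤ) :=
  AddMonoidHom.mk' (fun φ e => φ e.1.2 - φ e.1.1) (by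
    intro a b; funext e; simp [Pi.add_apply]; ring)

section SpanningTree

variable {A E G ι κ : Type*} [AddCommGroup A] [AddCommGroup G] (f : A →+ (E → G))
  (g : (ι → G) →+ A)

theorem nonempty_range_addEquiv_of_tree (tree : ι → E)
    (hg : ∀ t i, f (g t) (tree i) = t i)
    (hfg : ∀ a, f (g fun i => f a (tree i)) = f a) :
    Nonempty (f.range ≃+ (ι → G)) := by
  let r : f.range →+ (ι → G) :=
    (LinearMap.funLeft ℤ G tree).toAddMonoidHom.comp f.range.subtype
  refine ⟨AddEquiv.ofBijective r
    ⟨?_, fun t => ⟨⟨f (g t), g t, rfl⟩, funext (hg t)⟩⟩⟩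
  rw [injective_iff_map_eq_zero]
  rintro ⟨_, a, rfl⟩ (h : (fun i => f a (tree i)) = 0)
  ext1
  change f a = 0
  rw [← hfg a, h, map_zero, map_zero]

theorem nonempty_quotient_range_addEquiv_of_tree (σ : ι ⊕ κ ≃ E)
    (hg : ∀ t i, f (g t) (σ (.inl i)) = t i)
    (hfg : ∀ a, f (g fun i => f a (σ (.inl i))) = f a) :
    Nonempty (((E → G) ⧸ f.range) ≃+ (κ → G)) := by
  -- `circulation b k` is the circulation of `b` around the fundamental cycle of `σ (inr k)`
  let circulation : (E → G) →+ (κ → G) :=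
    (LinearMap.funLeft ℤ G (σ ∘ .inr)).toAddMonoidHom.comp
      (AddMonoidHom.id _ - f.comp (g.comp (LinearMap.funLeft ℤ G (σ ∘ .inl)).toAddMonoidHom))
  have hcirc (b : E → G) (k : κ) :
      circulation b k = b (σ (.inr k)) - f (g fun i => b (σ (.inl i))) (σ (.inr k)) := rfl
  have hker : circulation.ker = f.range := by
    ext b
    constructor
    · intro (hb : circulation b = 0)
      refine ⟨g fun i => b (σ (.inl i)), funext fun e => ?_⟩
      obtain ⟨i | k, rfl⟩ := σ.surjective e
      · exact hg _ i
      · exact (sub_eq_zero.mp ((hcirc b k).symm.trans (congrFun hb k))).symm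
    · rintro ⟨a, rfl⟩
      exact funext fun k => by rw [hcirc, hfg, sub_self]; rfl
  have hsurj : Function.Surjective circulation := fun n => by
    refine ⟨fun e => Sum.elim (0 : ι → G) n (σ.symm e), funext fun k => ?_⟩
    simp [hcirc, ← Pi.zero_def]
  exact ⟨(QuotientAddGroup.quotientAddEquivOfEq hker.symm).trans
    (QuotientAddGroup.quotientKerEquivOfSurjective circulation hsurj)⟩

end SpanningTree

instance (x y : Fin 3 → ℤ) : Decidable (adj6 x y) := by
  unfold adj6; infer_instance

instance : DecidableEq CubeVertex := inferInstanceAs (DecidableEq (Subtype _))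

instance : DecidableEq CubeEdge := inferInstanceAs (DecidableEq (Subtype _))

namespace CubeVertex

def ofBits (a b c : Fin 2) : CubeVertex :=
  ⟨![a, b, c], fun i => by fin_cases i <;> simp <;> omega⟩

theorem exists_eq_ofBits (v : CubeVertex) : ∃ a b c, v = ofBits a b c := by
  obtain ⟨x, hx⟩ := v
  have h0 := hx 0
  have h1 := hx 1
  have h2 := hx 2
  refine ⟨⟨(x 0).toNat, by omega⟩, ⟨(x 1).toNat, by omega⟩, ⟨(x 2).toNat, by omega⟩,
    Subtype.ext (funext fun i => ?_)⟩
  fin_cases i <;> simp [ofBits] <;> omega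

@[simp]
theorem coe_ofBits (a b c : Fin 2) : (ofBits a b c).1 = ![(a : ℤ), b, c] := rfl

end CubeVertex

open CubeVertex

def CubeEdge.mk' (u v : CubeVertex)
    (h : adj6 u.1 v.1 ∧ (∑ i, u.1 i) < ∑ i, v.1 i := by decide) : CubeEdge :=
  ⟨(u, v), h⟩

def treeEdge : Fin 7 → CubeEdge := ![
  .mk' (ofBits 0 0 0) (ofBits 1 0 0), .mk' (ofBits 0 0 0) (ofBits 0 1 0),
  .mk' (ofBits 0 0 0) (ofBits 0 0 1), .mk' (ofBits 1 0 0) (ofBits 1 1 0),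
  .mk' (ofBits 1 0 0) (ofBits 1 0 1), .mk' (ofBits 0 1 0) (ofBits 0 1 1),
  .mk' (ofBits 1 1 0) (ofBits 1 1 1)]

def cotreeEdge : Fin 5 → CubeEdge := ![
  .mk' (ofBits 0 1 0) (ofBits 1 1 0), .mk' (ofBits 0 0 1) (ofBits 1 0 1),
  .mk' (ofBits 0 1 1) (ofBits 1 1 1), .mk' (ofBits 0 0 1) (ofBits 0 1 1),
  .mk' (ofBits 1 0 1) (ofBits 1 1 1)]

theorem surjective_treeEdge_cotreeEdge :
    Function.Surjective (Sum.elim treeEdge cotreeEdge) := by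
  rintro ⟨⟨u, v⟩, h⟩
  obtain ⟨a, b, c, rfl⟩ := exists_eq_ofBits u
  obtain ⟨a', b', c', rfl⟩ := exists_eq_ofBits v
  have classify : ∀ a b c a' b' c' : Fin 2,
      adj6 (ofBits a b c).1 (ofBits a' b' c').1 ∧
        (∑ i, (ofBits a b c).1 i) < ∑ i, (ofBits a' b' c').1 i →
      ∃ x, (Sum.elim treeEdge cotreeEdge x).1 = (ofBits a b c, ofBits a' b' c') := by
    decide
  obtain ⟨x, hx⟩ := classify a b c a' b' c' h
  exact ⟨x, Subtype.ext hx⟩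

noncomputable def edgeEquiv : Fin 7 ⊕ Fin 5 ≃ CubeEdge :=
  Equiv.ofBijective (Sum.elim treeEdge cotreeEdge) ⟨by decide, surjective_treeEdge_cotreeEdge⟩

-- the multilinear interpolation of the sums of `t` along the tree paths from the origin
def treePotential : (Fin 7 → ℤ) →+ (CubeVertex → ℤ) :=
  AddMonoidHom.mk' (fun t v =>
    v.1 0 * t 0 + v.1 1 * t 1 + v.1 2 * t 2 + v.1 0 * v.1 1 * (t 3 - t 1) +
      v.1 0 * v.1 2 * (t 4 - t 2) + v.1 1 * v.1 2 * (t 5 - t 2) +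
      v.1 0 * v.1 1 * v.1 2 * (t 6 - t 4 - t 5 + t 2))
    (fun s t => by funext v; simp only [Pi.add_apply]; ring)

theorem delta0_treePotential (t : Fin 7 → ℤ) (i : Fin 7) :
    delta0 (treePotential t) (treeEdge i) = t i := by
  fin_cases i <;> simp [delta0, treePotential, treeEdge, CubeEdge.mk']
  ring

theorem treePotential_delta0 (φ : CubeVertex → ℤ) (v : CubeVertex) :
    treePotential (fun i => delta0 φ (treeEdge i)) v = φ v - φ (ofBits 0 0 0) := by
  obtain ⟨a, b, c, rfl⟩ := exists_eq_ofBits v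
  fin_cases a <;> fin_cases b <;> fin_cases c <;>
    simp [delta0, treePotential, treeEdge, CubeEdge.mk']
  ring

theorem delta0_treePotential_delta0 (φ : CubeVertex → ℤ) :
    delta0 (treePotential fun i => delta0 φ (treeEdge i)) = delta0 φ := by
  funext e
  change treePotential _ e.1.2 - treePotential _ e.1.1 = φ e.1.2 - φ e.1.1
  rw [treePotential_delta0, treePotential_delta0]
  ring

/-- the image of `δ⁰ : C⁰ ≅ ℤ⁸ → C¹ ≅ ℤ¹²` is free abelian of rank `7`,
and consequently `H^{1,6}(MSS′₆) = C¹ / Im δ⁰` is isomorphic to `ℤ⁵`. -/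
theorem MSS6'_H1 :
    Nonempty ((delta0.range : AddSubgroup (CubeEdge → ℤ)) ≃+ (Fin 7 → ℤ)) ∧
    Nonempty (((CubeEdge → ℤ) ⧸ delta0.range) ≃+ (Fin 5 → ℤ)) :=
  ⟨nonempty_range_addEquiv_of_tree delta0 treePotential treeEdge delta0_treePotential
      delta0_treePotential_delta0,
    nonempty_quotient_range_addEquiv_of_tree delta0 treePotential edgeEquiv
      delta0_treePotential delta0_treePotential_delta0⟩
end

section
/- The digital n-th higher topological complexity is monotone in n: for every digitally connected digital image (X,κ) and every n ≥ 2, TC_n(X,κ) ≤ TC_{n+1}(X,κ). -/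
/-- A digital path in the digital image `(X, adj)`: a function `f : ℤ → A` of length
`len` which stays in `X` on `[0,len]_ℤ` and moves at each step to an equal or
adjacent point. -/
structure DPath {A : Type*} (X : Set A) (adj : A → A → Prop) where
  len : ℕ
  f : ℤ → A
  mem : ∀ t ∈ Set.Icc (0 : ℤ) len, f t ∈ X
  step : ∀ t : ℤ, 0 ≤ t → t < len → (f t = f (t + 1) ∨ adj (f t) (f (t + 1)))

/-- Evaluation of a digital path at time `t`, with the path held constant at its end
value after time `len` (synchronization of path lengths). -/
def DPath.eval {A : Type*} {X : Set A} {adj : A → A → Prop}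
    (p : DPath X adj) (t : ℤ) : A := p.f (min t p.len)

/-- Adjacency of digital paths: after synchronizing lengths, at each time the values
are equal or adjacent. -/
def pathAdj {A : Type*} {X : Set A} {adj : A → A → Prop}
    (p q : DPath X adj) : Prop :=
  ∀ t : ℤ, 0 ≤ t → (p.eval t = q.eval t ∨ adj (p.eval t) (q.eval t))

/-- The product adjacency on `A × A` induced by `adj`. -/
def prodAdj {A : Type*} (adj : A → A → Prop) (u v : A × A) : Prop :=
  u ≠ v ∧ (u.1 = v.1 ∨ adj u.1 v.1) ∧ (u.2 = v.2 ∨ adj u.2 v.2)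

/-- `X × X` admits a cover by `l` sets, each with a digitally continuous section of
the endpoint map `π : PX → X × X`, `π(α) = (α(0), α(len))`. -/
def TCcover {A : Type*} (X : Set A) (adj : A → A → Prop) (l : ℕ) : Prop :=
  ∃ U : Fin l → Set (A × A),
    (∀ p ∈ X ×ˢ X, ∃ i, p ∈ U i) ∧
    ∀ i, U i ⊆ X ×ˢ X ∧
      ∃ s : A × A → DPath X adj,
        (∀ u ∈ U i, (s u).f 0 = u.1 ∧ (s u).f (s u).len = u.2) ∧
        (∀ u ∈ U i, ∀ v ∈ U i, prodAdj adj u v → pathAdj (s u) (s v))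

/-- The digital topological complexity number `TC(X, adj)`: the least `l ≥ 1`
admitting such a cover. -/
noncomputable def digTC {A : Type*} (X : Set A) (adj : A → A → Prop) : ℕ :=
  sInf {l | 0 < l ∧ TCcover X adj l}

/-- Digital homotopy of maps between digital images. -/
def DigHomotopic {A B : Type*} (X : Set A) (adjA : A → A → Prop)
    (Y : Set B) (adjB : B → B → Prop) (f g : A → B) : Prop :=
  ∃ (n : ℕ) (G : A → ℤ → B),
    (∀ x ∈ X, ∀ t ∈ Set.Icc (0 : ℤ) n, G x t ∈ Y) ∧
    (∀ x ∈ X, G x 0 = f x) ∧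
    (∀ x ∈ X, G x n = g x) ∧
    (∀ x ∈ X, ∀ t : ℤ, 0 ≤ t → t < n → (G x t = G x (t + 1) ∨ adjB (G x t) (G x (t + 1)))) ∧
    (∀ t ∈ Set.Icc (0 : ℤ) n, ∀ x ∈ X, ∀ x' ∈ X,
      adjA x x' → (G x t = G x' t ∨ adjB (G x t) (G x' t)))

/-- `(X, adj)` is digitally contractible: the identity is digitally homotopic to a
constant map. -/
def DigContractible {A : Type*} (X : Set A) (adj : A → A → Prop) : Prop :=
  ∃ c ∈ X, DigHomotopic X adj X adj id (fun _ => c)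

/-- `(X, adj)` is digitally connected. -/
def DigConnectedImage {A : Type*} (X : Set A) (adj : A → A → Prop) : Prop :=
  ∀ x ∈ X, ∀ y ∈ X, Relation.ReflTransGen (fun a b => a ∈ X ∧ b ∈ X ∧ adj a b) x y

/-- An element of `X^{J_n}` (a digitally continuous map on the wedge `J_n` of `n`
digital intervals): `n` digital paths with a common starting point. -/
structure Spider {A : Type*} (n : ℕ) (X : Set A) (adj : A → A → Prop) where
  legs : Fin n → DPath X adj
  start_eq : ∀ i j, (legs i).f 0 = (legs j).f 0

/-- The endpoint fibration `e_n : X^{J_n} → X^n`, evaluating at the `n` free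
endpoints of the wedge. -/
def spiderEnds {A : Type*} {n : ℕ} {X : Set A} {adj : A → A → Prop}
    (s : Spider n X adj) : Fin n → A :=
  fun i => (s.legs i).f (s.legs i).len

/-- Adjacency of spiders: legwise path adjacency. -/
def spiderAdj {A : Type*} {n : ℕ} {X : Set A} {adj : A → A → Prop}
    (s s' : Spider n X adj) : Prop :=
  ∀ i, pathAdj (s.legs i) (s'.legs i)

/-- The product adjacency on `A^n` induced by `adj`. -/
def prodAdjN {A : Type*} {n : ℕ} (adj : A → A → Prop) (u v : Fin n → A) : Prop :=
  u ≠ v ∧ ∀ i, u i = v i ∨ adj (u i) (v i)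

/-- `X^n` admits a cover by `l` sets, each with a digitally continuous section
of the fibration `e_n : X^{J_n} → X^n`. -/
def TCnCover {A : Type*} (n : ℕ) (X : Set A) (adj : A → A → Prop) (l : ℕ) : Prop :=
  ∃ U : Fin l → Set (Fin n → A),
    (∀ p : Fin n → A, (∀ i, p i ∈ X) → ∃ i, p ∈ U i) ∧
    ∀ i, (∀ p ∈ U i, ∀ j, p j ∈ X) ∧
      ∃ s : (Fin n → A) → Spider n X adj,
        (∀ p ∈ U i, spiderEnds (s p) = p) ∧
        (∀ p ∈ U i, ∀ q ∈ U i, prodAdjN adj p q → spiderAdj (s p) (s q))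

/-- The digital higher topological complexity `TC_n(X, adj)`: the digital Schwarz
genus of the fibration `e_n`, i.e. the least `l ≥ 1` admitting such a cover. -/
noncomputable def digTCn {A : Type*} (n : ℕ) (X : Set A) (adj : A → A → Prop) : ℕ :=
  sInf {l | 0 < l ∧ TCnCover n X adj l}

/-! Over a finite connected image every tuple of points is the end tuple of a spider, so
`X^{n+1}` is covered by finitely many singletons, and `TC_{n+1}` is attained. Pulling an
optimal cover of `X^{n+1}` back along the slice `p ↦ (p, p₀)` and forgetting the last leg of
each section gives a cover of `X^n` by as many sets. -/

variable {A : Type*} {X : Set A} {adj : A → A → Prop}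

namespace DPath

def const {c : A} (hc : c ∈ X) : DPath X adj :=
  ⟨0, fun _ => c, fun _ _ => hc, fun _ _ _ => by omega⟩

def snoc (p : DPath X adj) {c : A} (hc : c ∈ X) (h : adj (p.f p.len) c) : DPath X adj where
  len := p.len + 1
  f t := if t ≤ p.len then p.f t else c
  mem t ht := by
    split_ifs with hle
    · exact p.mem t ⟨ht.1, hle⟩
    · exact hc
  step t ht₀ ht := by
    push_cast at ht
    rcases lt_or_eq_of_le (Int.lt_add_one_iff.mp ht) with hlt | rfl
    · simpa [hlt.le, Int.add_one_le_iff.mpr hlt] using p.step t ht₀ hlt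
    · simpa using Or.inr h

theorem snoc_f_zero (p : DPath X adj) {c : A} (hc : c ∈ X) (h : adj (p.f p.len) c) :
    (p.snoc hc h).f 0 = p.f 0 := by
  simp [snoc]

theorem snoc_f_len (p : DPath X adj) {c : A} (hc : c ∈ X) (h : adj (p.f p.len) c) :
    (p.snoc hc h).f (p.snoc hc h).len = c := by
  simp [snoc]

theorem exists_of_reflTransGen {x y : A} (hx : x ∈ X)
    (h : Relation.ReflTransGen (fun a b => a ∈ X ∧ b ∈ X ∧ adj a b) x y) :
    ∃ p : DPath X adj, p.f 0 = x ∧ p.f p.len = y := by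
  induction h with
  | refl => exact ⟨const hx, rfl, rfl⟩
  | tail _ hbc ih =>
    obtain ⟨p, hp₀, hp_len⟩ := ih
    obtain ⟨-, hc, hadj⟩ := hbc
    exact ⟨p.snoc hc (hp_len ▸ hadj), (p.snoc_f_zero _ _).trans hp₀, p.snoc_f_len _ _⟩

end DPath

theorem exists_spider_ends_eq {k : ℕ} (hk : 0 < k) (hconn : DigConnectedImage X adj)
    {p : Fin k → A} (hp : ∀ i, p i ∈ X) : ∃ s : Spider k X adj, spiderEnds s = p := by
  have hleg (i : Fin k) : ∃ q : DPath X adj, q.f 0 = p ⟨0, hk⟩ ∧ q.f q.len = p i :=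
    DPath.exists_of_reflTransGen (hp _) (hconn _ (hp _) _ (hp i))
  choose q hq₀ hq_len using hleg
  exact ⟨⟨q, fun i j => (hq₀ i).trans (hq₀ j).symm⟩, funext hq_len⟩

theorem tcnCover_card_of_finite {k : ℕ} (hX : X.Finite)
    (hspider : ∀ p : Fin k → A, (∀ i, p i ∈ X) → ∃ s : Spider k X adj, spiderEnds s = p) :
    TCnCover k X adj (Nat.card {p : Fin k → A | ∀ i, p i ∈ X}) := by
  have : Finite {p : Fin k → A | ∀ i, p i ∈ X} := (Set.Finite.pi' fun _ => hX).to_subtype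
  let e := Finite.equivFin {p : Fin k → A | ∀ i, p i ∈ X}
  refine ⟨fun i => {(e.symm i : Fin k → A)}, fun p hp =>
    ⟨e ⟨p, hp⟩, by rw [Set.mem_singleton_iff, Equiv.symm_apply_apply]⟩, fun i =>
    ⟨?_, fun _ => (hspider _ (e.symm i).2).choose, ?_, ?_⟩⟩
  · rintro p rfl
    exact (e.symm i).2
  · rintro p rfl
    exact (hspider _ (e.symm i).2).choose_spec
  -- a section over a singleton is continuous because `prodAdjN` relates distinct points only
  · rintro p rfl q rfl hpq
    exact absurd rfl hpq.1

theorem tcnCover_nonempty {k : ℕ} (hk : 0 < k) (hX : X.Finite) (hne : X.Nonempty)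
    (hconn : DigConnectedImage X adj) : {l | 0 < l ∧ TCnCover k X adj l}.Nonempty := by
  obtain ⟨c, hc⟩ := hne
  have : Finite {p : Fin k → A | ∀ i, p i ∈ X} := (Set.Finite.pi' fun _ => hX).to_subtype
  have : Nonempty {p : Fin k → A | ∀ i, p i ∈ X} := ⟨⟨fun _ => c, fun _ => hc⟩⟩
  exact ⟨_, Nat.card_pos,
    tcnCover_card_of_finite hX fun _ hp => exists_spider_ends_eq hk hconn hp⟩

def Spider.init {n : ℕ} (s : Spider (n + 1) X adj) : Spider n X adj :=
  ⟨fun i => s.legs i.castSucc, fun _ _ => s.start_eq _ _⟩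

theorem spiderEnds_init {n : ℕ} (s : Spider (n + 1) X adj) :
    spiderEnds s.init = Fin.init (spiderEnds s) :=
  rfl

theorem spiderAdj.init {n : ℕ} {s s' : Spider (n + 1) X adj} (h : spiderAdj s s') :
    spiderAdj s.init s'.init :=
  fun i => h i.castSucc

theorem prodAdjN_snoc {n : ℕ} {p q : Fin n → A} {a b : A} (hpq : prodAdjN adj p q)
    (hab : a = b ∨ adj a b) : prodAdjN adj (Fin.snoc p a : Fin (n + 1) → A) (Fin.snoc q b) :=
  ⟨fun h => hpq.1 (Fin.snoc_injective2 h).1,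
    Fin.forall_fin_succ'.2 ⟨by simpa using hpq.2, by simpa using hab⟩⟩

theorem TCnCover.of_succ {n l : ℕ} (hn : 0 < n) (h : TCnCover (n + 1) X adj l) :
    TCnCover n X adj l := by
  obtain ⟨U, hcover, hU⟩ := h
  let slice (p : Fin n → A) : Fin (n + 1) → A := Fin.snoc p (p ⟨0, hn⟩)
  have slice_mem (p : Fin n → A) (hp : ∀ i, p i ∈ X) (i : Fin (n + 1)) : slice p i ∈ X :=
    (Fin.forall_fin_succ' (P := fun i => slice p i ∈ X)).2
      ⟨by simpa [slice] using hp, by simpa [slice] using hp _⟩ i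
  refine ⟨fun i => slice ⁻¹' U i, fun p hp => hcover _ (slice_mem p hp), fun i => ?_⟩
  obtain ⟨hUX, s, hends, hadj⟩ := hU i
  refine ⟨fun p hp j => by simpa [slice] using hUX _ hp j.castSucc,
    fun p => (s (slice p)).init, fun p hp => ?_, fun p hp q hq hpq => ?_⟩
  · rw [spiderEnds_init, hends _ hp, Fin.init_snoc]
  · exact (hadj _ hp _ hq (prodAdjN_snoc hpq (hpq.2 _))).init

/-- the digital higher topological complexity is monotone in `n`: for
every digitally connected digital image `(X, κ)` and every `n ≥ 2`,
`TC_n(X, κ) ≤ TC_{n+1}(X, κ)`. -/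
theorem digTCn_mono {m : ℕ} (X : Set (Fin m → ℤ))
    (κ : (Fin m → ℤ) → (Fin m → ℤ) → Prop) (hX : X.Finite) (hne : X.Nonempty)
    (hconn : DigConnectedImage X κ) (n : ℕ) (hn : 2 ≤ n) :
    digTCn n X κ ≤ digTCn (n + 1) X κ := by
  obtain ⟨hpos, hcover⟩ := Nat.sInf_mem (tcnCover_nonempty n.succ_pos hX hne hconn)
  exact Nat.sInf_le ⟨hpos, hcover.of_succ (by omega)⟩
end
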